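/- arXiv:0706.3937 — 2 statements merged into one kernel-verified Lean document; each statement's English description precedes it below -/
import Mathlib

section
/- If X is a chain connected uniform space and X is uniformly joinable, then X is joinable: any two points of X can be joined by a generalized path. -/
open UniformSpace Filter Function
open scoped Uniformity

universe u v

variable {X : Type u} {Y : Type v}

/-- An `E`-chain: consecutive pairs belong to `E`. -/
def IsEChain (E : Set (X × X)) (l : List X) : Prop :=
  l.Chain' fun a b => (a, b) ∈ E

/-- Homotopy rel endpoints of edge-paths in the Rips complex `R(X,E)`. -/
inductive RipsHtpy (E : Set (X × X)) : List X → List X → Prop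
  | refl (l : List X) : RipsHtpy E l l
  | symm {l₁ l₂ : List X} : RipsHtpy E l₁ l₂ → RipsHtpy E l₂ l₁
  | trans {l₁ l₂ l₃ : List X} : RipsHtpy E l₁ l₂ → RipsHtpy E l₂ l₃ → RipsHtpy E l₁ l₃
  | ins (l₁ l₂ : List X) (a v b : X) :
      (a, v) ∈ E → (v, b) ∈ E → (a, b) ∈ E →
      RipsHtpy E (l₁ ++ a :: b :: l₂) (l₁ ++ a :: v :: b :: l₂)

/-- `E`-homotopy of chains (endpoints may move within `E`). -/
def EHomotopic (E : Set (X × X)) (c d : List X) : Prop :=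
  ∃ xc xd yc yd : X, c.head? = some xc ∧ d.head? = some xd ∧
    c.getLast? = some yc ∧ d.getLast? = some yd ∧
    (xc, xd) ∈ E ∧ (yc, yd) ∈ E ∧
    RipsHtpy E c (xc :: (d ++ [yc]))

/-- The image `f(E)` of a relation under `f`. -/
def fimg (f : X → Y) (E : Set (X × X)) : Set (Y × Y) := Prod.map f f '' E

/-- A generalized (uniform) path from `x` to `y`. -/
structure GenPath (X : Type u) [UniformSpace X] (x y : X) where
  c : Set (X × X) → List X
  chain : ∀ E ∈ 𝓤 X, IsEChain E (c E)
  head : ∀ E ∈ 𝓤 X, (c E).head? = some x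
  last : ∀ E ∈ 𝓤 X, (c E).getLast? = some y
  compat : ∀ E ∈ 𝓤 X, ∀ F ∈ 𝓤 X, F ⊆ E → RipsHtpy E (c F) (c E)

/-- A generalized path is `E`-short if its `E`-term is the edge `e(x,y)`. -/
def GenPath.EShort [UniformSpace X] {x y : X} (p : GenPath X x y) (E : Set (X × X)) : Prop :=
  (x, y) ∈ E ∧ RipsHtpy E (p.c E) [x, y]

/-- `X` is joinable: any two points are joined by a generalized path. -/
def Joinable (X : Type u) [UniformSpace X] : Prop :=
  ∀ x y : X, Nonempty (GenPath X x y)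

/-- `X` is uniformly joinable. -/
def UniformlyJoinable (X : Type u) [UniformSpace X] : Prop :=
  ∀ E ∈ 𝓤 X, ∃ F ∈ 𝓤 X, ∀ x y : X, (x, y) ∈ F → ∃ p : GenPath X x y, p.EShort E

/-- `X` is chain connected. -/
def ChainConnected (X : Type u) [UniformSpace X] : Prop :=
  ∀ E ∈ 𝓤 X, ∀ x y : X, ∃ l : List X,
    IsEChain E l ∧ l.head? = some x ∧ l.getLast? = some y

/-- `f` generates the uniform structure of `Y`. -/
def GeneratesUS [UniformSpace X] [UniformSpace Y] (f : X → Y) : Prop :=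
  (∀ S ∈ 𝓤 Y, ∃ E ∈ 𝓤 X, fimg f E ⊆ S) ∧ ∀ E ∈ 𝓤 X, fimg f E ∈ 𝓤 Y

theorem RipsHtpy.map {E : Set (X × X)} {E' : Set (Y × Y)} (f : X → Y)
    (h : ∀ a b : X, (a, b) ∈ E → (f a, f b) ∈ E') :
    ∀ {l₁ l₂ : List X}, RipsHtpy E l₁ l₂ → RipsHtpy E' (l₁.map f) (l₂.map f) := by
  intro l₁ l₂ H
  induction H with
  | refl l => exact .refl _
  | symm _ ih => exact .symm ih
  | trans _ _ ih₁ ih₂ => exact .trans ih₁ ih₂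
  | ins l₁ l₂ a v b h₁ h₂ h₃ =>
      simpa using RipsHtpy.ins (l₁.map f) (l₂.map f) (f a) (f v) (f b)
        (h a v h₁) (h v b h₂) (h a b h₃)

theorem GeneratesUS.preimage [UniformSpace X] [UniformSpace Y] {f : X → Y}
    (hf : GeneratesUS f) : ∀ S ∈ 𝓤 Y, Prod.map f f ⁻¹' S ∈ 𝓤 X := by
  intro S hS
  obtain ⟨E, hE, hES⟩ := hf.1 S hS
  exact Filter.mem_of_superset hE fun p hp => hES ⟨p, hp, rfl⟩

/-- The pushforward of a generalized path along a map inducing the uniformity. -/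
def GenPath.map [UniformSpace X] [UniformSpace Y] (f : X → Y)
    (hf : ∀ S ∈ 𝓤 Y, Prod.map f f ⁻¹' S ∈ 𝓤 X) {x y : X} (p : GenPath X x y) :
    GenPath Y (f x) (f y) where
  c := fun F => (p.c (Prod.map f f ⁻¹' F)).map f
  chain := fun F hF => List.isChain_map_of_isChain f (fun a b hab => hab) (p.chain _ (hf F hF))
  head := fun F hF => by
    rw [List.head?_map, p.head _ (hf F hF)]; rfl
  last := fun F hF => by
    rw [List.getLast?_map, p.last _ (hf F hF)]; rfl
  compat := fun E hE F hF hFE =>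
    RipsHtpy.map f (fun a b hab => hab)
      (p.compat _ (hf E hE) _ (hf F hF) (Set.preimage_mono hFE))

/-- The space of generalized paths starting at `x₀`. -/
def GPSpace (X : Type u) [UniformSpace X] (x₀ : X) := Σ y : X, GenPath X x₀ y

/-- The endpoint projection. -/
def GPSpace.endpoint [UniformSpace X] {x₀ : X} (c : GPSpace X x₀) : X := c.1

/-- The basic entourage `E*` on `GP(X,x₀)`. -/
def EstarGP [UniformSpace X] (x₀ : X) (E : Set (X × X)) :
    Set (GPSpace X x₀ × GPSpace X x₀) :=
  { q | EHomotopic E (q.1.2.c E) (q.2.2.c E) }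

/-- The induced map on spaces of generalized paths. -/
def gpMap [UniformSpace X] [UniformSpace Y] (f : X → Y)
    (hf : ∀ S ∈ 𝓤 Y, Prod.map f f ⁻¹' S ∈ 𝓤 X) (x₀ : X) :
    GPSpace X x₀ → GPSpace Y (f x₀) :=
  fun c => ⟨f c.1, c.2.map f hf⟩

/-!
Uniform joinability provides an entourage `F` whose pairs are joined by generalized paths.
Chain connectedness joins any two points by an `F`-chain, and concatenating the generalized paths
along its edges joins its endpoints.
-/

theorem List.append_tail_eq_dropLast_append {α : Type*} {l₁ l₂ : List α} {y : α}
    (h₁ : l₁.getLast? = some y) (h₂ : l₂.head? = some y) :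
    l₁ ++ l₂.tail = l₁.dropLast ++ l₂ := by
  obtain ⟨a, rfl⟩ := List.getLast?_eq_some_iff.1 h₁
  obtain ⟨b, rfl⟩ := List.head?_eq_some_iff.1 h₂
  simp

theorem List.IsChain.append_tail {α : Type*} {R : α → α → Prop} {l₁ l₂ : List α} {y : α}
    (hc₁ : l₁.IsChain R) (hc₂ : l₂.IsChain R)
    (h₁ : l₁.getLast? = some y) (h₂ : l₂.head? = some y) : (l₁ ++ l₂.tail).IsChain R := by
  obtain ⟨a, rfl⟩ := List.getLast?_eq_some_iff.1 h₁
  obtain ⟨b, rfl⟩ := List.head?_eq_some_iff.1 h₂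
  simpa using hc₁.append_overlap (l₂ := [y]) hc₂ (List.cons_ne_nil _ _)

namespace RipsHtpy

variable {E : Set (X × X)}

theorem append_right {l₁ l₂ : List X} (m : List X) (h : RipsHtpy E l₁ l₂) :
    RipsHtpy E (l₁ ++ m) (l₂ ++ m) := by
  induction h with
  | refl l => exact .refl _
  | symm _ ih => exact .symm ih
  | trans _ _ ih₁ ih₂ => exact .trans ih₁ ih₂
  | ins la lb a v b h₁ h₂ h₃ => simpa using ins la (lb ++ m) a v b h₁ h₂ h₃

theorem append_left {l₁ l₂ : List X} (m : List X) (h : RipsHtpy E l₁ l₂) :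
    RipsHtpy E (m ++ l₁) (m ++ l₂) := by
  induction h with
  | refl l => exact .refl _
  | symm _ ih => exact .symm ih
  | trans _ _ ih₁ ih₂ => exact .trans ih₁ ih₂
  | ins la lb a v b h₁ h₂ h₃ => simpa using ins (m ++ la) lb a v b h₁ h₂ h₃

end RipsHtpy

namespace GenPath

variable [UniformSpace X]

def refl (x : X) : GenPath X x x where
  c _ := [x]
  chain _ _ := List.isChain_singleton x
  head _ _ := rfl
  last _ _ := rfl
  compat _ _ _ _ _ := .refl _

def trans {x y z : X} (p : GenPath X x y) (q : GenPath X y z) : GenPath X x z where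
  c E := p.c E ++ (q.c E).tail
  chain E hE := (p.chain E hE).append_tail (q.chain E hE) (p.last E hE) (q.head E hE)
  head E hE := by
    obtain ⟨a, ha⟩ := List.head?_eq_some_iff.1 (p.head E hE)
    simp [ha]
  last E hE := by
    rw [List.append_tail_eq_dropLast_append (p.last E hE) (q.head E hE), List.getLast?_append,
      q.last E hE, Option.some_or]
  compat E hE F hF hFE := by
    have hp : RipsHtpy E (p.c F ++ (q.c F).tail) (p.c E ++ (q.c F).tail) :=
      (p.compat E hE F hF hFE).append_right _
    have hq : RipsHtpy E ((p.c E).dropLast ++ q.c F) ((p.c E).dropLast ++ q.c E) :=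
      (q.compat E hE F hF hFE).append_left _
    rw [List.append_tail_eq_dropLast_append (p.last E hE) (q.head F hF)] at hp
    rw [List.append_tail_eq_dropLast_append (p.last E hE) (q.head E hE)]
    exact hp.trans hq

theorem nonempty_of_isEChain {F : Set (X × X)}
    (hF : ∀ a b : X, (a, b) ∈ F → Nonempty (GenPath X a b)) :
    ∀ {l : List X} {x y : X}, IsEChain F l → l.head? = some x → l.getLast? = some y →
      Nonempty (GenPath X x y)
  | [], _, _, _, hx, _ => by simp at hx
  | [a], x, y, _, hx, hy => by
    obtain rfl : a = x := by simpa using hx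
    obtain rfl : a = y := by simpa using hy
    exact ⟨refl a⟩
  | a :: b :: l, x, y, hl, hx, hy => by
    obtain rfl : a = x := by simpa using hx
    obtain ⟨hab, hbl⟩ := List.isChain_cons_cons.1 hl
    obtain ⟨p⟩ := hF a b hab
    obtain ⟨q⟩ := nonempty_of_isEChain hF hbl rfl (by rwa [List.getLast?_cons_cons] at hy)
    exact ⟨p.trans q⟩

end GenPath

/-- A chain connected, uniformly joinable uniform space is joinable. -/
theorem joinable_of_chainConnected_uniformlyJoinable [UniformSpace X]
    (hcc : ChainConnected X) (huj : UniformlyJoinable X) : Joinable X := by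
  obtain ⟨F, hF, hjoin⟩ := huj Set.univ univ_mem
  intro x y
  obtain ⟨l, hl, hx, hy⟩ := hcc F hF x y
  exact GenPath.nonempty_of_isEChain (fun a b hab => (hjoin a b hab).nonempty) hl hx hy
end

section
/- If f : X₁ → X₂ and g : X₂ → X₃ are generalized uniform covering maps (each generating the uniform structure of its range), then the composition g∘f : X₁ → X₃ is a generalized uniform covering map. -/
open UniformSpace Filter Function
open scoped Uniformity

universe u v

variable {X : Type u} {Y : Type v}

/-- A generalized uniform covering map: it generates the uniform structure of the
range and satisfies GP1, GP2, C1 and C2. -/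
def IsGUCM [UniformSpace X] [UniformSpace Y] (f : X → Y) : Prop :=
  ∃ hgen : GeneratesUS f,
    -- GP1: generalized path lifting
    (∀ x₀ : X, ∀ d : GPSpace Y (f x₀), ∃ c : GPSpace X x₀,
      gpMap f hgen.preimage x₀ c = d) ∧
    -- GP2: approximate uniqueness of generalized path lifts
    (∀ E ∈ 𝓤 X, ∃ F ∈ 𝓤 X, ∀ (x y z : X) (c : GenPath X x y) (d : GenPath X x z),
      EHomotopic (fimg f F) ((c.map f hgen.preimage).c (fimg f F))
        ((d.map f hgen.preimage).c (fimg f F)) →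
      EHomotopic E (c.c E) (d.c E)) ∧
    -- C1: chain lifting
    (∀ E ∈ 𝓤 X, ∃ F ∈ 𝓤 X, ∀ x : X, ∀ l : List Y,
      IsEChain (fimg f F) l → l.head? = some (f x) →
      ∃ l' : List X, IsEChain E l' ∧ l'.head? = some x ∧ l'.map f = l) ∧
    -- C2: approximate uniqueness of chain lifts
    (∀ E ∈ 𝓤 X, ∃ F ∈ 𝓤 X, ∀ α β : List X,
      IsEChain F α → IsEChain F β → α.head? = β.head? →
      EHomotopic (fimg f F) (α.map f) (β.map f) → EHomotopic E α β)

/-!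
Every lifting property of `g ∘ f` is obtained by lifting first along `g` and then along `f`.
The entourages are chosen backwards: for an entourage `E` of `X₁`, the property of `f` supplies
`F₁`, the property of `g` for the entourage `f(F₁)` of `X₂` supplies `F₂`, and `f⁻¹(F₂)` (shrunk
into `F₁` for (C2)) works for `g ∘ f`. In (GP2) the hypothesis concerns the terms of index
`(g ∘ f)(f⁻¹ F₂) ⊆ g(F₂)` of the generalized paths; compatibility of the terms of a generalized
path moves it to the index `g(F₂)`, where (GP2) for `g` applies.
-/

theorem RipsHtpy.mono {E E' : Set (X × X)} (h : E ⊆ E') {l₁ l₂ : List X}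
    (H : RipsHtpy E l₁ l₂) : RipsHtpy E' l₁ l₂ := by
  induction H with
  | refl l => exact .refl _
  | symm _ ih => exact .symm ih
  | trans _ _ ih₁ ih₂ => exact .trans ih₁ ih₂
  | ins l₁ l₂ a v b h₁ h₂ h₃ => exact .ins l₁ l₂ a v b (h h₁) (h h₂) (h h₃)

theorem RipsHtpy.head?_eq {E : Set (X × X)} {l₁ l₂ : List X} (H : RipsHtpy E l₁ l₂) :
    l₁.head? = l₂.head? := by
  induction H with
  | refl l => rfl
  | symm _ ih => exact ih.symm
  | trans _ _ ih₁ ih₂ => exact ih₁.trans ih₂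
  | ins l₁ l₂ a v b _ _ _ => cases l₁ <;> simp

theorem RipsHtpy.getLast?_eq {E : Set (X × X)} {l₁ l₂ : List X} (H : RipsHtpy E l₁ l₂) :
    l₁.getLast? = l₂.getLast? := by
  induction H with
  | refl l => rfl
  | symm _ ih => exact ih.symm
  | trans _ _ ih₁ ih₂ => exact ih₁.trans ih₂
  | ins l₁ l₂ a v b _ _ _ =>
      rcases List.eq_nil_or_concat l₂ with rfl | ⟨l', e, rfl⟩ <;>
        simp [List.getLast?_append]

theorem RipsHtpy.append_append {E : Set (X × X)} (p s : List X) {l₁ l₂ : List X}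
    (H : RipsHtpy E l₁ l₂) : RipsHtpy E (p ++ l₁ ++ s) (p ++ l₂ ++ s) := by
  induction H with
  | refl l => exact .refl _
  | symm _ ih => exact .symm ih
  | trans _ _ ih₁ ih₂ => exact .trans ih₁ ih₂
  | ins l₁ l₂ a v b h₁ h₂ h₃ =>
      simpa [List.append_assoc] using RipsHtpy.ins (p ++ l₁) (l₂ ++ s) a v b h₁ h₂ h₃

theorem IsEChain.mono {E E' : Set (X × X)} (h : E ⊆ E') {l : List X}
    (hl : IsEChain E l) : IsEChain E' l :=
  hl.imp fun _ _ hab => h hab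

theorem EHomotopic.of_ripsHtpy {E E' : Set (X × X)} (hEE' : E ⊆ E')
    {α β α' β' : List X} (h : EHomotopic E α β)
    (hα : RipsHtpy E' α α') (hβ : RipsHtpy E' β β') : EHomotopic E' α' β' := by
  obtain ⟨xα, xβ, yα, yβ, hxα, hxβ, hyα, hyβ, hx, hy, hαβ⟩ := h
  refine ⟨xα, xβ, yα, yβ, hα.head?_eq ▸ hxα, hβ.head?_eq ▸ hxβ, hα.getLast?_eq ▸ hyα,
    hβ.getLast?_eq ▸ hyβ, hEE' hx, hEE' hy, ?_⟩
  simpa using hα.symm.trans ((hαβ.mono hEE').trans (hβ.append_append [xα] [yα]))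

theorem EHomotopic.mono {E E' : Set (X × X)} (hEE' : E ⊆ E') {α β : List X}
    (h : EHomotopic E α β) : EHomotopic E' α β :=
  h.of_ripsHtpy hEE' (.refl _) (.refl _)

theorem fimg_comp {Z : Type*} (f : X → Y) (g : Y → Z) (E : Set (X × X)) :
    fimg (g ∘ f) E = fimg g (fimg f E) := by
  simp only [fimg, Set.image_image]
  rfl

theorem fimg_comp_preimage_subset {Z : Type*} (f : X → Y) (g : Y → Z) {E : Set (X × X)}
    {G : Set (Y × Y)} (h : E ⊆ Prod.map f f ⁻¹' G) : fimg (g ∘ f) E ⊆ fimg g G := by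
  rw [fimg_comp]
  exact Set.image_mono (Set.image_subset_iff.2 h)

theorem GeneratesUS.comp {Z : Type*} [UniformSpace X] [UniformSpace Y] [UniformSpace Z]
    {f : X → Y} {g : Y → Z} (hg : GeneratesUS g) (hf : GeneratesUS f) :
    GeneratesUS (g ∘ f) := by
  refine ⟨fun S hS => ?_, fun E hE => fimg_comp f g E ▸ hg.2 _ (hf.2 E hE)⟩
  obtain ⟨F₂, hF₂, hF₂S⟩ := hg.1 S hS
  obtain ⟨F₁, hF₁, hF₁F₂⟩ := hf.1 F₂ hF₂
  exact ⟨F₁, hF₁, fimg_comp f g F₁ ▸ (Set.image_mono hF₁F₂).trans hF₂S⟩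

namespace GenPath

variable [UniformSpace X]

theorem ext {x y : X} {p q : GenPath X x y} (h : p.c = q.c) : p = q := by
  cases p; cases q; cases h; rfl

theorem eHomotopic_mono {x y x' y' : X} {p : GenPath X x y} {q : GenPath X x' y'}
    {S S' : Set (X × X)} (hS : S ∈ 𝓤 X) (hS' : S' ∈ 𝓤 X) (hSS' : S ⊆ S')
    (h : EHomotopic S (p.c S) (q.c S)) : EHomotopic S' (p.c S') (q.c S') :=
  h.of_ripsHtpy hSS' (p.compat S' hS' S hS hSS') (q.compat S' hS' S hS hSS')

theorem map_map {Z : Type*} [UniformSpace Y] [UniformSpace Z] (f : X → Y) (g : Y → Z)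
    (hf : ∀ S ∈ 𝓤 Y, Prod.map f f ⁻¹' S ∈ 𝓤 X) (hg : ∀ S ∈ 𝓤 Z, Prod.map g g ⁻¹' S ∈ 𝓤 Y)
    {x y : X} (p : GenPath X x y) :
    (p.map f hf).map g hg = p.map (g ∘ f) fun S hS => hf _ (hg S hS) :=
  ext <| funext fun _ => List.map_map

end GenPath

theorem gpMap_comp {Z : Type*} [UniformSpace X] [UniformSpace Y] [UniformSpace Z]
    (f : X → Y) (g : Y → Z) (hf : ∀ S ∈ 𝓤 Y, Prod.map f f ⁻¹' S ∈ 𝓤 X)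
    (hg : ∀ S ∈ 𝓤 Z, Prod.map g g ⁻¹' S ∈ 𝓤 Y) (x₀ : X) :
    gpMap (g ∘ f) (fun S hS => hf _ (hg S hS)) x₀ = gpMap g hg (f x₀) ∘ gpMap f hf x₀ :=
  funext fun c => congrArg (Sigma.mk _) (GenPath.map_map f g hf hg c.2).symm

-- The conditions (GP1), (GP2), (C1), (C2) in the definition of `IsGUCM`.

def LiftsGenPaths [UniformSpace X] [UniformSpace Y] (f : X → Y)
    (hf : ∀ S ∈ 𝓤 Y, Prod.map f f ⁻¹' S ∈ 𝓤 X) : Prop :=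
  ∀ x₀ : X, Surjective (gpMap f hf x₀)

def GenPathLiftsAreClose [UniformSpace X] [UniformSpace Y] (f : X → Y)
    (hf : ∀ S ∈ 𝓤 Y, Prod.map f f ⁻¹' S ∈ 𝓤 X) : Prop :=
  ∀ E ∈ 𝓤 X, ∃ F ∈ 𝓤 X, ∀ (x y z : X) (c : GenPath X x y) (d : GenPath X x z),
    EHomotopic (fimg f F) ((c.map f hf).c (fimg f F)) ((d.map f hf).c (fimg f F)) →
    EHomotopic E (c.c E) (d.c E)

def LiftsChains [UniformSpace X] (f : X → Y) : Prop :=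
  ∀ E ∈ 𝓤 X, ∃ F ∈ 𝓤 X, ∀ x : X, ∀ l : List Y,
    IsEChain (fimg f F) l → l.head? = some (f x) →
    ∃ l' : List X, IsEChain E l' ∧ l'.head? = some x ∧ l'.map f = l

def ChainLiftsAreClose [UniformSpace X] (f : X → Y) : Prop :=
  ∀ E ∈ 𝓤 X, ∃ F ∈ 𝓤 X, ∀ α β : List X,
    IsEChain F α → IsEChain F β → α.head? = β.head? →
    EHomotopic (fimg f F) (α.map f) (β.map f) → EHomotopic E α β

section Comp

variable {Z : Type*} [UniformSpace X] [UniformSpace Y] {f : X → Y} {g : Y → Z}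

theorem LiftsGenPaths.comp [UniformSpace Z] {hf : ∀ S ∈ 𝓤 Y, Prod.map f f ⁻¹' S ∈ 𝓤 X}
    {hg : ∀ S ∈ 𝓤 Z, Prod.map g g ⁻¹' S ∈ 𝓤 Y} (hg₁ : LiftsGenPaths g hg)
    (hf₁ : LiftsGenPaths f hf) : LiftsGenPaths (g ∘ f) fun S hS => hf _ (hg S hS) :=
  fun x₀ => gpMap_comp f g hf hg x₀ ▸ (hg₁ (f x₀)).comp (hf₁ x₀)

theorem GenPathLiftsAreClose.comp [UniformSpace Z] (hg : GeneratesUS g) (hf : GeneratesUS f)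
    (hg₂ : GenPathLiftsAreClose g hg.preimage) (hf₂ : GenPathLiftsAreClose f hf.preimage) :
    GenPathLiftsAreClose (g ∘ f) (hg.comp hf).preimage := by
  intro E hE
  obtain ⟨F₁, hF₁, hF₁E⟩ := hf₂ E hE
  obtain ⟨F₂, hF₂, hF₂F₁⟩ := hg₂ (fimg f F₁) (hf.2 _ hF₁)
  refine ⟨Prod.map f f ⁻¹' F₂, hf.preimage _ hF₂, fun x y z c d hcd => ?_⟩
  rw [← GenPath.map_map f g hf.preimage hg.preimage c,
    ← GenPath.map_map f g hf.preimage hg.preimage d] at hcd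
  exact hF₁E x y z c d <| hF₂F₁ (f x) (f y) (f z) _ _ <|
    GenPath.eHomotopic_mono ((hg.comp hf).2 _ (hf.preimage _ hF₂)) (hg.2 _ hF₂)
      (fimg_comp_preimage_subset f g subset_rfl) hcd

theorem LiftsChains.comp (hf : GeneratesUS f) (hg₁ : LiftsChains g) (hf₁ : LiftsChains f) :
    LiftsChains (g ∘ f) := by
  intro E hE
  obtain ⟨F₁, hF₁, hF₁E⟩ := hf₁ E hE
  obtain ⟨F₂, hF₂, hF₂F₁⟩ := hg₁ (fimg f F₁) (hf.2 _ hF₁)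
  refine ⟨Prod.map f f ⁻¹' F₂, hf.preimage _ hF₂, fun x l hl hhead => ?_⟩
  obtain ⟨l₂, hl₂, hhead₂, rfl⟩ :=
    hF₂F₁ (f x) l (hl.mono (fimg_comp_preimage_subset f g subset_rfl)) hhead
  obtain ⟨l₁, hl₁, hhead₁, rfl⟩ := hF₁E x l₂ hl₂ hhead₂
  exact ⟨l₁, hl₁, hhead₁, (List.map_map ..).symm⟩

theorem ChainLiftsAreClose.comp (hf : GeneratesUS f) (hg₂ : ChainLiftsAreClose g)
    (hf₂ : ChainLiftsAreClose f) : ChainLiftsAreClose (g ∘ f) := by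
  intro E hE
  obtain ⟨F₁, hF₁, hF₁E⟩ := hf₂ E hE
  obtain ⟨F₂, hF₂, hF₂F₁⟩ := hg₂ (fimg f F₁) (hf.2 _ hF₁)
  refine ⟨F₁ ∩ Prod.map f f ⁻¹' F₂, inter_mem hF₁ (hf.preimage _ hF₂),
    fun α β hα hβ hhead hαβ => ?_⟩
  have hmap {γ : List X} (hγ : IsEChain (F₁ ∩ Prod.map f f ⁻¹' F₂) γ) :
      IsEChain F₂ (γ.map f) :=
    List.isChain_map_of_isChain f (fun _ _ hab => hab.2) hγ
  refine hF₁E α β (hα.mono Set.inter_subset_left) (hβ.mono Set.inter_subset_left) hhead <|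
    hF₂F₁ _ _ (hmap hα) (hmap hβ) (by simp only [List.head?_map, hhead]) ?_
  rw [List.map_map, List.map_map]
  exact hαβ.mono (fimg_comp_preimage_subset f g Set.inter_subset_right)

end Comp

/-- The composition of two generalized uniform covering maps is a generalized uniform
covering map. -/
theorem isGUCM_comp {X₁ X₂ X₃ : Type*}
    [UniformSpace X₁] [UniformSpace X₂] [UniformSpace X₃]
    (f : X₁ → X₂) (g : X₂ → X₃) (hf : IsGUCM f) (hg : IsGUCM g) :
    IsGUCM (g ∘ f) := by
  obtain ⟨hf₀, hf₁, hf₂, hf₃, hf₄⟩ := hf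
  obtain ⟨hg₀, hg₁, hg₂, hg₃, hg₄⟩ := hg
  exact ⟨hg₀.comp hf₀, LiftsGenPaths.comp hg₁ hf₁, GenPathLiftsAreClose.comp hg₀ hf₀ hg₂ hf₂,
    LiftsChains.comp hf₀ hg₃ hf₃, ChainLiftsAreClose.comp hf₀ hg₄ hf₄⟩
end
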